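/- arXiv:2408.11656 — 3 statements merged into one kernel-verified Lean document; each statement's English description precedes it below -/
import Mathlib

section
/- Let N be an ℕ-valued random variable with P[N = n] = 2^{−(n+1)} for all n ∈ ℕ, let (a_n)_{n∈ℕ} be a sequence of nonnegative reals, and let z ∈ ℝ satisfy ∑_{n=0}^∞ a_n |z|^n < ∞. Then the random variable a_N · 2^{N+1} · z^N is integrable and E[a_N · 2^{N+1} · z^N] = ∑_{n=0}^∞ a_n z^n. -/
open MeasureTheory ProbabilityTheory

/-!
`N` has the geometric law with success probability `1/2`. Dividing by its point masses
`(1 - p) ^ n * p` turns an expectation against this law into a plain sum, so the reweighted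
variable is integrable exactly when the series converges absolutely, and its mean is the series.
-/

namespace ProbabilityTheory

variable {Ω 𝓧 : Type*} {mΩ : MeasurableSpace Ω} {m𝓧 : MeasurableSpace 𝓧}
  {P : Measure Ω} {μ : Measure 𝓧} {X : Ω → 𝓧}

lemma HasLaw.integrable_comp_iff {E : Type*} [NormedAddCommGroup E] (hX : HasLaw X μ P)
    {f : 𝓧 → E} (hf : AEStronglyMeasurable f μ) :
    Integrable (fun ω ↦ f (X ω)) P ↔ Integrable f μ := by
  rw [← hX.map_eq] at hf ⊢
  exact (integrable_map_measure hf hX.aemeasurable).symm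

variable {p : unitInterval} {N : Ω → ℕ}

lemma hasLaw_geometricMeasure (hp : p ≠ 0) (hN : Measurable N)
    (hNdist : ∀ n, P (N ⁻¹' {n}) = ENNReal.ofReal ((1 - p) ^ n * p)) :
    HasLaw N (geometricMeasure p) P where
  map_eq := Measure.ext_of_singleton fun n ↦ by
    rw [Measure.map_apply hN (measurableSet_singleton n), hNdist, geometricMeasure_singleton hp]

variable {E : Type*} [NormedAddCommGroup E] [NormedSpace ℝ E]

lemma integrable_geometricMeasure_inv_smul_iff (h0 : p ≠ 0) (h1 : p ≠ 1) {f : ℕ → E} :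
    Integrable (fun n ↦ ((1 - p : ℝ) ^ n * p)⁻¹ • f n) (geometricMeasure p) ↔
      Summable (fun n ↦ ‖f n‖) := by
  rw [integrable_geometricMeasure_iff h0]
  congr! 2 with n
  rw [norm_smul, norm_inv, Real.norm_of_nonneg (geometricMeasure_nonneg p n),
    mul_inv_cancel_left₀ (geometricMeasure_pos h0 h1 n).ne']

lemma integral_geometricMeasure_inv_smul [FiniteDimensional ℝ E] (h0 : p ≠ 0) (h1 : p ≠ 1)
    (f : ℕ → E) :
    ∫ n, ((1 - p : ℝ) ^ n * p)⁻¹ • f n ∂geometricMeasure p = ∑' n, f n := by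
  rw [integral_geometricMeasure h0]
  exact tsum_congr fun n ↦ smul_inv_smul₀ (geometricMeasure_pos h0 h1 n).ne' (f n)

lemma HasLaw.integrable_geometricMeasure_inv_smul (hN : HasLaw N (geometricMeasure p) P)
    (h0 : p ≠ 0) (h1 : p ≠ 1) {f : ℕ → E} (hf : Summable (fun n ↦ ‖f n‖)) :
    Integrable (fun ω ↦ ((1 - p : ℝ) ^ N ω * p)⁻¹ • f (N ω)) P :=
  (hN.integrable_comp_iff .of_discrete).2 ((integrable_geometricMeasure_inv_smul_iff h0 h1).2 hf)

lemma HasLaw.integral_geometricMeasure_inv_smul [FiniteDimensional ℝ E]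
    (hN : HasLaw N (geometricMeasure p) P) (h0 : p ≠ 0) (h1 : p ≠ 1) (f : ℕ → E) :
    ∫ ω, ((1 - p : ℝ) ^ N ω * p)⁻¹ • f (N ω) ∂P = ∑' n, f n :=
  (hN.integral_comp .of_discrete).trans
    (ProbabilityTheory.integral_geometricMeasure_inv_smul h0 h1 f)

end ProbabilityTheory

theorem geometric_reweighted_unbiased_general
    {Ω : Type*} [MeasurableSpace Ω] (μ : Measure Ω)
    (N : Ω → ℕ) (hN : Measurable N)
    (hNdist : ∀ n : ℕ, μ (N ⁻¹' {n}) = (2 : ENNReal)⁻¹ ^ (n + 1))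
    (a : ℕ → ℝ) (ha : ∀ n, 0 ≤ a n) (z : ℝ)
    (hsum : Summable (fun n => a n * |z| ^ n)) :
    Integrable (fun ω => a (N ω) * 2 ^ (N ω + 1) * z ^ (N ω)) μ ∧
      ∫ ω, a (N ω) * 2 ^ (N ω + 1) * z ^ (N ω) ∂μ = ∑' n : ℕ, a n * z ^ n := by
  set half : unitInterval := ⟨2⁻¹, by norm_num, by norm_num⟩
  have h0 : half ≠ 0 := by simp [half, ← Subtype.coe_ne_coe]
  have h1 : half ≠ 1 := by simp [half, ← Subtype.coe_ne_coe]
  have hweight (n : ℕ) : (1 - half : ℝ) ^ n * half = 2⁻¹ ^ (n + 1) := by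
    norm_num [half, pow_succ]
  have hlaw : HasLaw N (geometricMeasure half) μ := hasLaw_geometricMeasure h0 hN fun n ↦ by
    rw [hNdist, hweight, ENNReal.ofReal_pow (by norm_num), ENNReal.ofReal_inv_of_pos two_pos,
      ENNReal.ofReal_ofNat]
  have hreweight : (fun ω ↦ a (N ω) * 2 ^ (N ω + 1) * z ^ (N ω)) =
      fun ω ↦ ((1 - half : ℝ) ^ N ω * half)⁻¹ • (a (N ω) * z ^ N ω) := by
    ext ω
    rw [hweight, smul_eq_mul, inv_pow, inv_inv]
    ring
  have hnorm : Summable fun n ↦ ‖a n * z ^ n‖ := by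
    simpa [abs_of_nonneg (ha _)] using hsum
  rw [hreweight]
  exact ⟨hlaw.integrable_geometricMeasure_inv_smul h0 h1 hnorm,
    hlaw.integral_geometricMeasure_inv_smul h0 h1 fun n ↦ a n * z ^ n⟩

/-- Let `N` be an `ℕ`-valued random variable with `P[N = n] = 2^{-(n+1)}`, let `(a n)` be
nonnegative reals and `z : ℝ` with `∑ n, a n * |z|^n < ∞`. Then `a N * 2^(N+1) * z^N` is
integrable and its expectation is `∑ n, a n * z^n`. -/
theorem geometric_reweighted_unbiased
    {Ω : Type*} [MeasurableSpace Ω] (μ : Measure Ω) [IsProbabilityMeasure μ]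
    (N : Ω → ℕ) (hN : Measurable N)
    (hNdist : ∀ n : ℕ, μ (N ⁻¹' {n}) = (2 : ENNReal)⁻¹ ^ (n + 1))
    (a : ℕ → ℝ) (ha : ∀ n, 0 ≤ a n) (z : ℝ)
    (hsum : Summable (fun n => a n * |z| ^ n)) :
    Integrable (fun ω => a (N ω) * 2 ^ (N ω + 1) * z ^ (N ω)) μ ∧
      ∫ ω, a (N ω) * 2 ^ (N ω + 1) * z ^ (N ω) ∂μ = ∑' n : ℕ, a n * z ^ n :=
  geometric_reweighted_unbiased_general μ N hN hNdist a ha z hsum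
end

section
/- Let d be a positive integer, let (a_n)_{n∈ℕ} be nonnegative reals with ∑_{n=0}^∞ a_n < ∞, let N be an ℕ-valued random variable with P[N = n] = 2^{−(n+1)}, and let (ω_j)_{j≥1} be a sequence of i.i.d. random vectors uniform on {−1,1}^d, independent of N. Define the random Maclaurin feature φ(x) = √(a_N · 2^{N+1}) · ∏_{j=1}^N ⟨ω_j, x⟩ for x ∈ ℝ^d (with the same realization of N and ω_1,…,ω_N used for every input). Then for all x, y ∈ ℝ^d with ‖x‖₂ ≤ 1 and ‖y‖₂ ≤ 1, the product φ(x)·φ(y) is integrable and E[φ(x) · φ(y)] = ∑_{n=0}^∞ a_n ⟨x, y⟩^n. -/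
open MeasureTheory ProbabilityTheory

/-- The sign vector in `ℝ^d` associated to a Boolean vector. -/
noncomputable def signVec (d : ℕ) (b : Fin d → Bool) : EuclideanSpace ℝ (Fin d) :=
  WithLp.toLp 2 (fun i => if b i then (1 : ℝ) else -1)

/-- The uniform distribution on `{-1, 1}^d ⊆ ℝ^d` (a Rademacher random vector). -/
noncomputable def rademacherMeasure (d : ℕ) : Measure (EuclideanSpace ℝ (Fin d)) :=
  Measure.map (signVec d) (PMF.uniformOfFintype (Fin d → Bool)).toMeasure

/-!
On the event `{N = n}` the product `φ x * φ y` equals `a n * 2 ^ (n + 1) * ∏ j < n, g (ω j)` with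
`g z = ⟪z, x⟫ * ⟪z, y⟫`. As `N` is independent of the i.i.d. vectors `ω j`, and the coordinates of
a Rademacher vector are orthonormal so that `E[g(ω)] = ⟪x, y⟫`, the integral over that event is
`P[N = n] * a n * 2 ^ (n + 1) * ⟪x, y⟫ ^ n = a n * ⟪x, y⟫ ^ n`. The same computation with `|g|`,
where `E|g(ω)| ≤ ‖x‖ * ‖y‖ ≤ 1` by Cauchy–Schwarz, bounds the integral of `|φ x * φ y|` over
`{N = n}` by `a n`. Summability of `a` then gives integrability, and the integral is the sum of
the integrals over the events `{N = n}`.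
-/

open Finset

namespace ProbabilityTheory

variable {Ω ι : Type*} {mΩ : MeasurableSpace Ω} {μ : Measure Ω}

lemma iIndepFun.integrable_finsetProd {f : ι → Ω → ℝ} (hf : iIndepFun f μ)
    (hf_meas : ∀ i, AEMeasurable (f i) μ) (hf_int : ∀ i, Integrable (f i) μ) (s : Finset ι) :
    Integrable (fun ω ↦ ∏ i ∈ s, f i ω) μ := by
  have := hf.isProbabilityMeasure
  induction s using Finset.cons_induction with
  | empty => simp
  | cons i s hi ih =>
    rw [← prod_fn] at ih ⊢
    rw [prod_cons]
    exact (hf.indepFun_finsetProd_of_notMem₀ hf_meas hi).symm.integrable_mul (hf_int i) ih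

lemma iIndepFun.integral_finsetProd {f : ι → Ω → ℝ} (hf : iIndepFun f μ)
    (hf_meas : ∀ i, AEMeasurable (f i) μ) (s : Finset ι) :
    ∫ ω, ∏ i ∈ s, f i ω ∂μ = ∏ i ∈ s, ∫ ω, f i ω ∂μ := by
  have := hf.isProbabilityMeasure
  induction s using Finset.cons_induction with
  | empty => simp
  | cons i s hi ih =>
    simp_rw [prod_cons, ← ih, ← prod_apply]
    exact (hf.indepFun_finsetProd_of_notMem₀ hf_meas hi).symm.integral_fun_mul_eq_mul_integral
      (hf_meas i).aestronglyMeasurable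
      (s.aemeasurable_prod fun j _ ↦ hf_meas j).aestronglyMeasurable

variable {E : Type*} {mE : MeasurableSpace E} {X : ι → Ω → E} {ν : Measure E} {u : E → ℝ}

lemma iIndepFun.integrable_finsetProd_comp (hX : iIndepFun X μ)
    (hX_meas : ∀ i, AEMeasurable (X i) μ) (hX_law : ∀ i, μ.map (X i) = ν) (hu : Measurable u)
    (hu_int : Integrable u ν) (s : Finset ι) :
    Integrable (fun ω ↦ ∏ i ∈ s, u (X i ω)) μ :=
  (hX.comp (fun _ ↦ u) fun _ ↦ hu).integrable_finsetProd
    (fun i ↦ hu.comp_aemeasurable (hX_meas i))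
    (fun i ↦ (integrable_map_measure hu.aestronglyMeasurable (hX_meas i)).1
      (hX_law i ▸ hu_int)) s

lemma iIndepFun.integral_finsetProd_comp (hX : iIndepFun X μ)
    (hX_meas : ∀ i, AEMeasurable (X i) μ) (hX_law : ∀ i, μ.map (X i) = ν) (hu : Measurable u)
    (s : Finset ι) :
    ∫ ω, ∏ i ∈ s, u (X i ω) ∂μ = (∫ z, u z ∂ν) ^ #s := by
  have := (hX.comp (fun _ ↦ u) fun _ ↦ hu).integral_finsetProd
    (fun i ↦ hu.comp_aemeasurable (hX_meas i)) s
  simp only [Function.comp_apply] at this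
  rw [this, ← prod_const]
  refine prod_congr rfl fun i _ ↦ ?_
  rw [← hX_law i, integral_map (hX_meas i) hu.aestronglyMeasurable]

lemma IndepFun.setIntegral_preimage_eq_mul {β γ : Type*} {mβ : MeasurableSpace β}
    {mγ : MeasurableSpace γ} {N : Ω → β} {W : Ω → γ} (hNW : IndepFun N W μ) (hN : Measurable N)
    (hW : AEMeasurable W μ) {F : γ → ℝ} (hF : Measurable F) {A : Set β} (hA : MeasurableSet A) :
    ∫ ω in N ⁻¹' A, F (W ω) ∂μ = μ.real (N ⁻¹' A) * ∫ ω, F (W ω) ∂μ :=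
  Indep.setIntegral_eq_mul hN.comap_le hNW hW ⟨A, hA, rfl⟩ hF.aestronglyMeasurable

end ProbabilityTheory

namespace MeasureTheory

variable {Ω β E : Type*} {mΩ : MeasurableSpace Ω} {μ : Measure Ω} [NormedAddCommGroup E]
  {N : Ω → β} {f : Ω → E}

lemma integrable_of_summable_setIntegral_norm_preimage [Countable β]
    (hf : ∀ b, IntegrableOn f (N ⁻¹' {b}) μ)
    (hsum : Summable fun b ↦ ∫ ω in N ⁻¹' {b}, ‖f ω‖ ∂μ) : Integrable f μ := by
  simpa [← Set.preimage_iUnion, Set.iUnion_of_singleton] using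
    integrableOn_iUnion_of_summable_integral_norm hf hsum

lemma integral_eq_tsum_setIntegral_preimage [NormedSpace ℝ E] [Countable β] [MeasurableSpace β]
    [MeasurableSingletonClass β] (hN : Measurable N) (hf : Integrable f μ) :
    ∫ ω, f ω ∂μ = ∑' b, ∫ ω in N ⁻¹' {b}, f ω ∂μ := by
  rw [← integral_iUnion (fun b ↦ hN (measurableSet_singleton b))
    (fun b c hbc ↦ Set.disjoint_singleton.2 hbc |>.preimage N) (by simpa using hf.integrableOn)]
  simp [← Set.preimage_iUnion, Set.iUnion_of_singleton]

end MeasureTheory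

section Rademacher

variable {d : ℕ}

instance : IsProbabilityMeasure (rademacherMeasure d) :=
  Measure.isProbabilityMeasure_map (measurable_of_finite _).aemeasurable

lemma integral_rademacherMeasure {f : EuclideanSpace ℝ (Fin d) → ℝ} (hf : Measurable f) :
    ∫ z, f z ∂rademacherMeasure d = (∑ b, f (signVec d b)) / 2 ^ d := by
  rw [rademacherMeasure, integral_map (measurable_of_finite _).aemeasurable
    hf.aestronglyMeasurable, PMF.integral_eq_sum]
  simp [div_eq_inv_mul, mul_sum]

lemma integrable_rademacherMeasure {f : EuclideanSpace ℝ (Fin d) → ℝ} (hf : Measurable f) :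
    Integrable f (rademacherMeasure d) := by
  rw [rademacherMeasure, integrable_map_measure hf.aestronglyMeasurable
    (measurable_of_finite _).aemeasurable]
  exact .of_finite

lemma sum_signVec_mul_signVec (i k : Fin d) :
    ∑ b, signVec d b i * signVec d b k = if i = k then 2 ^ d else 0 := by
  split_ifs with hik
  · subst hik
    have hsq : ∀ b, signVec d b i * signVec d b i = 1 := fun b ↦ by
      cases h : b i <;> simp [signVec, h]
    simp [hsq]
  · -- flipping the `i`-th sign is a bijection that negates every term
    let flip : Equiv.Perm (Fin d → Bool) :=
      Function.Involutive.toPerm (fun b ↦ Function.update b i !(b i)) fun b ↦ by simp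
    have hflip : ∀ b, signVec d (flip b) i * signVec d (flip b) k
        = -(signVec d b i * signVec d b k) := fun b ↦ by
      have hb : flip b = Function.update b i !(b i) := rfl
      cases h : b i <;> cases h' : b k <;>
        simp [hb, signVec, h, h', Function.update_of_ne (Ne.symm hik)]
    have := Equiv.sum_comp flip fun b ↦ signVec d b i * signVec d b k
    simp only [hflip, sum_neg_distrib] at this
    linarith

lemma inner_signVec (b : Fin d → Bool) (x : EuclideanSpace ℝ (Fin d)) :
    inner ℝ (signVec d b) x = ∑ i, signVec d b i * x i := by
  simp [PiLp.inner_apply, mul_comm]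

lemma sum_inner_signVec_mul_inner (x y : EuclideanSpace ℝ (Fin d)) :
    ∑ b, inner ℝ (signVec d b) x * inner ℝ (signVec d b) y = 2 ^ d * inner ℝ x y := by
  calc ∑ b, inner ℝ (signVec d b) x * inner ℝ (signVec d b) y
      = ∑ i, ∑ k, (∑ b, signVec d b i * signVec d b k) * (x i * y k) := by
        simp_rw [inner_signVec, sum_mul_sum, sum_mul]
        rw [sum_comm]
        refine sum_congr rfl fun i _ ↦ ?_
        rw [sum_comm]
        exact sum_congr rfl fun k _ ↦ sum_congr rfl fun b _ ↦ by ring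
    _ = 2 ^ d * inner ℝ x y := by
        simp [sum_signVec_mul_signVec, PiLp.inner_apply, mul_sum, mul_comm]

lemma integral_inner_mul_inner_rademacherMeasure (x y : EuclideanSpace ℝ (Fin d)) :
    ∫ z, inner ℝ z x * inner ℝ z y ∂rademacherMeasure d = inner ℝ x y := by
  rw [integral_rademacherMeasure (by fun_prop), sum_inner_signVec_mul_inner]
  field_simp

lemma integral_abs_inner_mul_inner_rademacherMeasure_le (x y : EuclideanSpace ℝ (Fin d)) :
    ∫ z, |inner ℝ z x * inner ℝ z y| ∂rademacherMeasure d ≤ ‖x‖ * ‖y‖ := by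
  have hsq (v : EuclideanSpace ℝ (Fin d)) :
      ∑ b, |inner ℝ (signVec d b) v| ^ 2 = 2 ^ d * ‖v‖ ^ 2 := by
    simp_rw [sq_abs, sq, sum_inner_signVec_mul_inner, real_inner_self_eq_norm_mul_norm]
  have h2d : √(2 ^ d : ℝ) * √(2 ^ d) = 2 ^ d := Real.mul_self_sqrt (by positivity)
  rw [integral_rademacherMeasure (by fun_prop), div_le_iff₀ (by positivity)]
  calc ∑ b, |inner ℝ (signVec d b) x * inner ℝ (signVec d b) y|
      = ∑ b, |inner ℝ (signVec d b) x| * |inner ℝ (signVec d b) y| := by simp_rw [abs_mul]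
    _ ≤ √(∑ b, |inner ℝ (signVec d b) x| ^ 2) * √(∑ b, |inner ℝ (signVec d b) y| ^ 2) :=
        Real.sum_mul_le_sqrt_mul_sqrt _ _ _
    _ = ‖x‖ * ‖y‖ * 2 ^ d := by
        rw [hsq, hsq, Real.sqrt_mul (by positivity), Real.sqrt_mul (by positivity),
          Real.sqrt_sq (norm_nonneg x), Real.sqrt_sq (norm_nonneg y)]
        linear_combination ‖x‖ * ‖y‖ * h2d

end Rademacher

lemma sqrt_mul_prod_mul_sqrt_mul_prod {ι : Type*} {c : ℝ} (hc : 0 ≤ c) (s : Finset ι)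
    (f g : ι → ℝ) :
    (√c * ∏ i ∈ s, f i) * (√c * ∏ i ∈ s, g i) = c * ∏ i ∈ s, f i * g i := by
  rw [prod_mul_distrib]
  linear_combination (∏ i ∈ s, f i) * (∏ i ∈ s, g i) * Real.mul_self_sqrt hc

lemma setIntegral_preimage_singleton_prod_range_comp {Ω E : Type*} {mΩ : MeasurableSpace Ω}
    {mE : MeasurableSpace E} {μ : Measure Ω} {ν : Measure E} {N : Ω → ℕ} {ω : ℕ → Ω → E}
    (hN : Measurable N) (hω_meas : ∀ j, AEMeasurable (ω j) μ) (hω_indep : iIndepFun ω μ)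
    (hω_law : ∀ j, μ.map (ω j) = ν) (hNω : IndepFun N (fun s j ↦ ω j s) μ) {u : E → ℝ}
    (hu : Measurable u) (n : ℕ) :
    ∫ s in N ⁻¹' {n}, ∏ j ∈ range n, u (ω j s) ∂μ
      = μ.real (N ⁻¹' {n}) * (∫ z, u z ∂ν) ^ n := by
  rw [hNω.setIntegral_preimage_eq_mul hN (aemeasurable_pi_lambda _ hω_meas)
      (F := fun w ↦ ∏ j ∈ range n, u (w j)) (by fun_prop) (measurableSet_singleton n),
    hω_indep.integral_finsetProd_comp hω_meas hω_law hu, card_range]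

theorem rmf_single_feature_unbiased_general
    (d : ℕ)
    {Ω : Type*} [MeasurableSpace Ω] (μ : Measure Ω)
    (a : ℕ → ℝ) (ha : ∀ n, 0 ≤ a n) (hsum : Summable a)
    (N : Ω → ℕ) (hN : Measurable N)
    (hNdist : ∀ n : ℕ, μ (N ⁻¹' {n}) = (2 : ENNReal)⁻¹ ^ (n + 1))
    (ω : ℕ → Ω → EuclideanSpace ℝ (Fin d))
    (hωindep : iIndepFun ω μ)
    (hωdist : ∀ j, Measure.map (ω j) μ = rademacherMeasure d)
    (hNω : IndepFun N (fun s j => ω j s) μ)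
    (φ : EuclideanSpace ℝ (Fin d) → Ω → ℝ)
    (hφ : ∀ x s, φ x s =
      Real.sqrt (a (N s) * 2 ^ (N s + 1)) * ∏ j ∈ Finset.range (N s), (inner ℝ (ω j s) x : ℝ))
    (x y : EuclideanSpace ℝ (Fin d)) (hx : ‖x‖ ≤ 1) (hy : ‖y‖ ≤ 1) :
    Integrable (fun s => φ x s * φ y s) μ ∧
      ∫ s, φ x s * φ y s ∂μ = ∑' n : ℕ, a n * (inner ℝ x y : ℝ) ^ n := by
  set g : EuclideanSpace ℝ (Fin d) → ℝ := fun z ↦ inner ℝ z x * inner ℝ z y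
  have hg : Measurable g := by fun_prop
  have hc n : 0 ≤ a n * 2 ^ (n + 1) := mul_nonneg (ha n) (by positivity)
  have hω_meas j : AEMeasurable (ω j) μ :=
    .of_map_ne_zero <| hωdist j ▸ IsProbabilityMeasure.ne_zero _
  have hfiber {u : EuclideanSpace ℝ (Fin d) → ℝ} (hu : Measurable u) n :
      ∫ s in N ⁻¹' {n}, ∏ j ∈ range n, u (ω j s) ∂μ
        = (∫ z, u z ∂rademacherMeasure d) ^ n / 2 ^ (n + 1) := by
    rw [setIntegral_preimage_singleton_prod_range_comp hN hω_meas hωindep hωdist hNω hu,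
      measureReal_def, hNdist]
    simp [div_eq_inv_mul]
  have hon n : Set.EqOn (fun s ↦ φ x s * φ y s)
      (fun s ↦ a n * 2 ^ (n + 1) * ∏ j ∈ range n, g (ω j s)) (N ⁻¹' {n}) := fun s hs ↦ by
    simp only [Set.mem_preimage, Set.mem_singleton_iff] at hs
    simp only [hφ, hs, g, sqrt_mul_prod_mul_sqrt_mul_prod (hc n)]
  have hint_on n : IntegrableOn (fun s ↦ φ x s * φ y s) (N ⁻¹' {n}) μ :=
    ((hωindep.integrable_finsetProd_comp hω_meas hωdist hg (integrable_rademacherMeasure hg)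
      _).const_mul _).integrableOn.congr_fun (hon n).symm (hN (measurableSet_singleton n))
  have hnorm_on n : ∫ s in N ⁻¹' {n}, ‖φ x s * φ y s‖ ∂μ ≤ a n := by
    rw [setIntegral_congr_fun (hN (measurableSet_singleton n)) fun s hs ↦ by
        rw [show φ x s * φ y s = _ from hon n hs, Real.norm_eq_abs, abs_mul,
          abs_of_nonneg (hc n), abs_prod],
      integral_const_mul, hfiber hg.abs]
    calc _ = a n * (∫ z, |g z| ∂rademacherMeasure d) ^ n := by field_simp
      _ ≤ a n := mul_le_of_le_one_right (ha n) <|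
          pow_le_one₀ (integral_nonneg fun _ ↦ abs_nonneg _)
            ((integral_abs_inner_mul_inner_rademacherMeasure_le x y).trans
              (mul_le_one₀ hx (norm_nonneg y) hy))
  have hval_on n : ∫ s in N ⁻¹' {n}, φ x s * φ y s ∂μ = a n * inner ℝ x y ^ n := by
    rw [setIntegral_congr_fun (hN (measurableSet_singleton n)) (hon n), integral_const_mul,
      hfiber hg, integral_inner_mul_inner_rademacherMeasure]
    field_simp
  have hint := integrable_of_summable_setIntegral_norm_preimage hint_on
    (.of_nonneg_of_le (fun n ↦ integral_nonneg fun _ ↦ norm_nonneg _) hnorm_on hsum)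
  exact ⟨hint, (integral_eq_tsum_setIntegral_preimage hN hint).trans (tsum_congr hval_on)⟩

/-- Single-feature unbiasedness of the Random Maclaurin Feature (with `p = 2`):
if `N` has `P[N = n] = 2^{-(n+1)}`, the `ω j` are i.i.d. Rademacher vectors independent of `N`,
and `φ x = √(a_N 2^{N+1}) ∏_{j<N} ⟨ω j, x⟩`, then for `‖x‖₂ ≤ 1`, `‖y‖₂ ≤ 1`, `φ x * φ y` is
integrable with `E[φ(x) φ(y)] = ∑ n, a n ⟨x, y⟩^n`. -/
theorem rmf_single_feature_unbiased
    (d : ℕ) (hd : 0 < d)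
    {Ω : Type*} [MeasurableSpace Ω] (μ : Measure Ω) [IsProbabilityMeasure μ]
    (a : ℕ → ℝ) (ha : ∀ n, 0 ≤ a n) (hsum : Summable a)
    (N : Ω → ℕ) (hN : Measurable N)
    (hNdist : ∀ n : ℕ, μ (N ⁻¹' {n}) = (2 : ENNReal)⁻¹ ^ (n + 1))
    (ω : ℕ → Ω → EuclideanSpace ℝ (Fin d))
    (hωindep : iIndepFun ω μ)
    (hωdist : ∀ j, Measure.map (ω j) μ = rademacherMeasure d)
    (hNω : IndepFun N (fun s j => ω j s) μ)
    (φ : EuclideanSpace ℝ (Fin d) → Ω → ℝ)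
    (hφ : ∀ x s, φ x s =
      Real.sqrt (a (N s) * 2 ^ (N s + 1)) * ∏ j ∈ Finset.range (N s), (inner ℝ (ω j s) x : ℝ))
    (x y : EuclideanSpace ℝ (Fin d)) (hx : ‖x‖ ≤ 1) (hy : ‖y‖ ≤ 1) :
    Integrable (fun s => φ x s * φ y s) μ ∧
      ∫ s, φ x s * φ y s ∂μ = ∑' n : ℕ, a n * (inner ℝ x y : ℝ) ^ n :=
  rmf_single_feature_unbiased_general d μ a ha hsum N hN hNdist ω hωindep hωdist hNω φ hφ x y hx hy
end

section
/- Let n, d be positive integers, let q, μ ∈ ℝ^d, let k_1, …, k_n ∈ ℝ^d, let ν ∈ ℝ^d, and let r > 0. Define s, m ∈ ℝ^n by s_j = ⟨q, k_j⟩ / √d and m_j = ⟨μ, k_j⟩ / √d, and define u ∈ ℝ^n by u_j = ⟨q − μ, k_j − ν⟩ / (r √d). Then for every index j, softmax(u)_j = (softmax(s)_j)^{1/r} · (softmax(m)_j)^{−1/r} / ∑_{j'=1}^n (softmax(s)_{j'})^{1/r} · (softmax(m)_{j'})^{−1/r}. -/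
/-- The softmax function on `ℝ^n`: `softmax s i = exp (s i) / ∑ j, exp (s j)`. -/
noncomputable def softmax {n : ℕ} (s : Fin n → ℝ) (i : Fin n) : ℝ :=
  Real.exp (s i) / ∑ j, Real.exp (s j)

/-!
Centering the keys by `ν` shifts every score `u j` by the same constant, to which softmax is
blind, and centering the query by `μ` turns `u` into `(s - m) / r` up to that constant. On the
other side, `softmax s j = exp (s j - log Z_s)`, so `softmax s j ^ (1/r) * softmax m j ^ (-1/r)`
is `exp ((s j - m j) / r)` times a factor independent of `j`, which normalization removes.
-/

open Real

section Softmax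

variable {n : ℕ}

theorem softmax_add_const (f : Fin n → ℝ) (c : ℝ) :
    softmax (fun j => f j + c) = softmax f := by
  funext i
  simp only [softmax, exp_add, ← Finset.sum_mul]
  exact mul_div_mul_right _ _ (exp_pos c).ne'

theorem softmax_eq_exp_sub_log (s : Fin n → ℝ) (i : Fin n) :
    softmax s i = exp (s i - log (∑ j, exp (s j))) := by
  have hsum : 0 < ∑ j, exp (s j) := Finset.sum_pos (fun j _ => exp_pos (s j)) ⟨i, by simp⟩
  rw [exp_sub, exp_log hsum, softmax]

theorem softmax_rpow_mul_softmax_rpow_neg (s m : Fin n → ℝ) (a : ℝ) (i : Fin n) :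
    softmax s i ^ a * softmax m i ^ (-a)
      = exp (a * (s i - m i) + a * (log (∑ j, exp (m j)) - log (∑ j, exp (s j)))) := by
  rw [softmax_eq_exp_sub_log, softmax_eq_exp_sub_log, ← exp_mul, ← exp_mul, ← exp_add]
  ring_nf

theorem softmax_eq_div_sum_of_eq_exp_add {v w : Fin n → ℝ} (c : ℝ)
    (h : ∀ i, w i = exp (v i + c)) (i : Fin n) :
    softmax v i = w i / ∑ j, w j := by
  rw [← softmax_add_const v c]
  simp only [softmax, h]

end Softmax

theorem softmax_ppSBN_identity_general
    (n d : ℕ)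
    (q μ ν : EuclideanSpace ℝ (Fin d)) (k : Fin n → EuclideanSpace ℝ (Fin d))
    (r : ℝ)
    (s m u : Fin n → ℝ)
    (hs : ∀ j, s j = (inner ℝ q (k j) : ℝ) / Real.sqrt d)
    (hm : ∀ j, m j = (inner ℝ μ (k j) : ℝ) / Real.sqrt d)
    (hu : ∀ j, u j = (inner ℝ (q - μ) (k j - ν) : ℝ) / (r * Real.sqrt d)) :
    ∀ j, softmax u j
      = softmax s j ^ (1 / r) * softmax m j ^ (-(1 / r)) /
          ∑ j', softmax s j' ^ (1 / r) * softmax m j' ^ (-(1 / r)) := by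
  have hscores : u = fun j => 1 / r * (s j - m j) + -inner ℝ (q - μ) ν / (r * √d) := by
    funext j
    rw [hu, hs, hm, inner_sub_right, inner_sub_left, inner_sub_left]
    ring
  rw [hscores, softmax_add_const]
  exact softmax_eq_div_sum_of_eq_exp_add _ fun j => softmax_rpow_mul_softmax_rpow_neg s m _ j

/-- Attention-weight form of Theorem 3 of the paper: the softmax attention weights computed
from batch-normalized inputs (query centered by `μ`, keys centered by `ν`, scores rescaled by
`r`) equal the normalized ratio of the `(1/r)`-th powers of the original attention weights
`softmax s` and the mean-query attention weights `softmax m`. -/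
theorem softmax_ppSBN_identity
    (n d : ℕ) (hn : 0 < n) (hd : 0 < d)
    (q μ ν : EuclideanSpace ℝ (Fin d)) (k : Fin n → EuclideanSpace ℝ (Fin d))
    (r : ℝ) (hr : 0 < r)
    (s m u : Fin n → ℝ)
    (hs : ∀ j, s j = (inner ℝ q (k j) : ℝ) / Real.sqrt d)
    (hm : ∀ j, m j = (inner ℝ μ (k j) : ℝ) / Real.sqrt d)
    (hu : ∀ j, u j = (inner ℝ (q - μ) (k j - ν) : ℝ) / (r * Real.sqrt d)) :
    ∀ j, softmax u j
      = softmax s j ^ (1 / r) * softmax m j ^ (-(1 / r)) /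
          ∑ j', softmax s j' ^ (1 / r) * softmax m j' ^ (-(1 / r)) :=
  softmax_ppSBN_identity_general n d q μ ν k r s m u hs hm hu
end
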